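/- arXiv:1811.02128 — 4 statements merged into one kernel-verified Lean document; each statement's English description precedes it below -/
import Mathlib

section
/- Let F be a field and n, m ≥ 1. Let J be the 2m×2m block matrix [[I_m, 0], [0, −Ω_m]] and K the 2m×2m block matrix [[Ω_m, 0], [0, I_m]], and let P be the 4nm×4nm block-diagonal matrix whose first n diagonal 2m×2m blocks all equal J and whose last n diagonal 2m×2m blocks all equal K. Then P is invertible with P² = I, it satisfies P·Ω_{4nm}·Pᵀ = Ψ_{2n} ⊗ Ψ_{2m}, and consequently for every A ∈ Sp_{2n}(F) and B ∈ Sp_{2m}(F) the matrix ρ_SP(A,B) := P⁻¹·(A ⊗ B)·P lies in SO_{4nm}(F). -/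
open Matrix

/-- The `d × d` exchange matrix `Ω_d`: entry 1 exactly when (1-based) `i + j = d + 1`. -/
def omegaMat (F : Type*) [CommRing F] (d : ℕ) : Matrix (Fin d) (Fin d) F :=
  fun i j => if (i : ℕ) + (j : ℕ) + 1 = d then 1 else 0

/-- `SO_d(F)`: the set of `d × d` matrices with `A · Ω_d · Aᵀ = Ω_d` and `det A = 1`. -/
def SOset (F : Type*) [CommRing F] (d : ℕ) : Set (Matrix (Fin d) (Fin d) F) :=
  {A | A * omegaMat F d * Aᵀ = omegaMat F d ∧ A.det = 1}

/-- `Ψ_{2n} = [[0, Ω_n], [−Ω_n, 0]]`. -/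
def PsiMat (F : Type*) [CommRing F] (n : ℕ) : Matrix (Fin (2*n)) (Fin (2*n)) F :=
  fun i j => if (i : ℕ) + (j : ℕ) + 1 = 2*n then (if (i : ℕ) < n then 1 else -1) else 0

/-- `Sp_{2n}(F)`: the set of `2n × 2n` matrices with `A · Ψ_{2n} · Aᵀ = Ψ_{2n}`. -/
def SpSet (F : Type*) [CommRing F] (n : ℕ) : Set (Matrix (Fin (2*n)) (Fin (2*n)) F) :=
  {A | A * PsiMat F n * Aᵀ = PsiMat F n}

/-- Kronecker product, regarded as an `(nm) × (nm)` matrix via the lexicographic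
identification sending the (1-based) pair `(i,k)` to `m(i−1)+k`. -/
def kron {F : Type*} [CommRing F] {n m : ℕ} (A : Matrix (Fin n) (Fin n) F)
    (B : Matrix (Fin m) (Fin m) F) : Matrix (Fin (n*m)) (Fin (n*m)) F :=
  Matrix.reindex finProdFinEquiv finProdFinEquiv (Matrix.kroneckerMap (· * ·) A B)

/-- 1-based matrix unit `E_{i,j}` in `M_d(F)`. -/
def Eunit (F : Type*) [CommRing F] (d : ℕ) (i j : ℕ) : Matrix (Fin d) (Fin d) F :=
  fun p q => if (p : ℕ) + 1 = i ∧ (q : ℕ) + 1 = j then 1 else 0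

/-- Entry function (0-based) of the `2m × 2m` block `J = [[I_m, 0], [0, −Ω_m]]`. -/
def Jent (F : Type*) [CommRing F] (m r c : ℕ) : F :=
  if r < m ∧ c < m then (if r = c then 1 else 0)
  else if m ≤ r ∧ m ≤ c then (if r + c + 1 = 3*m then -1 else 0)
  else 0

/-- Entry function (0-based) of the `2m × 2m` block `K = [[Ω_m, 0], [0, I_m]]`. -/
def Kent (F : Type*) [CommRing F] (m r c : ℕ) : F :=
  if r < m ∧ c < m then (if r + c + 1 = m then 1 else 0)
  else if m ≤ r ∧ m ≤ c then (if r = c then 1 else 0)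
  else 0

/-- The `4nm × 4nm` block-diagonal matrix `P` whose first `n` diagonal `2m × 2m` blocks
equal `J` and whose last `n` diagonal blocks equal `K`. -/
def Pmat (F : Type*) [CommRing F] (n m : ℕ) :
    Matrix (Fin ((2*n)*(2*m))) (Fin ((2*n)*(2*m))) F :=
  fun p q =>
    if (p : ℕ) / (2*m) = (q : ℕ) / (2*m) then
      (if (p : ℕ) / (2*m) < n then Jent F m ((p : ℕ) % (2*m)) ((q : ℕ) % (2*m))
       else Kent F m ((p : ℕ) % (2*m)) ((q : ℕ) % (2*m)))
    else 0

/-!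
`P` is a signed permutation matrix, and so are `Ω` and `Ψ`; after identifying `Fin (4nm)` with
`Fin 2n × Fin 2m`, every identity becomes a statement about composing the underlying index maps
and multiplying signs. The index map of `P` is an involution along which its signs square to one,
so `P² = 1`; it conjugates the full reversal into itself, turning the signs of `Ω` into those of
`Ψ ⊗ Ψ`. Since `P` carries the form `Ω` to `Ψ ⊗ Ψ`, which `A ⊗ B` preserves, `P⁻¹ (A ⊗ B) P`
preserves `Ω`; its determinant is `det A ^ 2m * det B ^ 2n = 1`, since `A Ψ Aᵀ = Ψ` with `Ψ`
invertible forces `det A = ±1`.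
-/

section MonomialMatrix

variable {ι κ R : Type*} [DecidableEq ι] [DecidableEq κ] [CommSemiring R]

def monomialMatrix (f : ι → ι) (s : ι → R) : Matrix ι ι R :=
  of fun p q => if q = f p then s p else 0

theorem monomialMatrix_apply (f : ι → ι) (s : ι → R) (p q : ι) :
    monomialMatrix f s p q = if q = f p then s p else 0 := rfl

theorem monomialMatrix_mul [Fintype ι] (f g : ι → ι) (s t : ι → R) :
    monomialMatrix f s * monomialMatrix g t
      = monomialMatrix (g ∘ f) (fun p => s p * t (f p)) := by
  ext p q
  simp only [monomialMatrix_apply, mul_apply, ite_mul, zero_mul]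
  rw [Finset.sum_ite_eq' Finset.univ (f p)]
  simp only [Finset.mem_univ, if_true, mul_ite, mul_zero, Function.comp_apply]

theorem monomialMatrix_mul_self_eq_one [Fintype ι] {f : ι → ι} {s : ι → R}
    (hf : Function.Involutive f) (hs : ∀ p, s p * s (f p) = 1) :
    monomialMatrix f s * monomialMatrix f s = 1 := by
  ext p q
  rw [monomialMatrix_mul, monomialMatrix_apply, Function.comp_apply, hf, hs, one_apply]
  exact if_congr eq_comm rfl rfl

theorem transpose_monomialMatrix {f : ι → ι} (hf : Function.Involutive f) (s : ι → R) :
    (monomialMatrix f s)ᵀ = monomialMatrix f (s ∘ f) := by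
  ext p q
  rw [transpose_apply, monomialMatrix_apply, monomialMatrix_apply]
  by_cases h : q = f p
  · simp [h, hf p]
  · rw [if_neg h, if_neg (fun h' => h (by rw [h', hf]))]

theorem kroneckerMap_monomialMatrix (f : ι → ι) (g : κ → κ) (s : ι → R) (t : κ → R) :
    kroneckerMap (· * ·) (monomialMatrix f s) (monomialMatrix g t)
      = monomialMatrix (Prod.map f g) (fun x => s x.1 * t x.2) := by
  ext ⟨i, r⟩ ⟨j, c⟩
  by_cases h1 : j = f i <;> by_cases h2 : c = g r <;>
    simp [monomialMatrix_apply, kroneckerMap_apply, Prod.ext_iff, h1, h2]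

theorem reindex_monomialMatrix (e : ι ≃ κ) (f : ι → ι) (s : ι → R) :
    reindex e e (monomialMatrix f s) = monomialMatrix (e ∘ f ∘ e.symm) (s ∘ e.symm) := by
  ext p q
  simp [monomialMatrix_apply, Equiv.symm_apply_eq]

end MonomialMatrix

section Forms

variable {ι R : Type*} [Fintype ι] [DecidableEq ι] [CommRing R]

def PreservesForm (M A : Matrix ι ι R) : Prop :=
  A * M * Aᵀ = M

theorem PreservesForm.det_sq_eq_one {M A : Matrix ι ι R} (hM : IsUnit M.det)
    (hA : PreservesForm M A) : A.det ^ 2 = 1 := by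
  have h := congrArg det hA
  rw [det_mul, det_mul, det_transpose, mul_right_comm, ← sq] at h
  exact hM.mul_left_inj.mp (h.trans (one_mul _).symm)

theorem PreservesForm.conj {M N P K : Matrix ι ι R} (hP : IsUnit P) (hPM : P * M * Pᵀ = N)
    (hK : PreservesForm N K) : PreservesForm M (P⁻¹ * K * P) := by
  have hPinv : P⁻¹ * P = 1 := nonsing_inv_mul P ((isUnit_iff_isUnit_det P).mp hP)
  have hPinvT : Pᵀ * P⁻¹ᵀ = 1 := by rw [← transpose_mul, hPinv, transpose_one]
  calc P⁻¹ * K * P * M * (P⁻¹ * K * P)ᵀ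
      = P⁻¹ * (K * (P * M * Pᵀ) * Kᵀ) * P⁻¹ᵀ := by
        simp only [transpose_mul, Matrix.mul_assoc]
    _ = P⁻¹ * (P * M * Pᵀ) * P⁻¹ᵀ := by rw [hPM, hK]
    _ = M := by simp only [← Matrix.mul_assoc, hPinv, Matrix.one_mul]
                simp only [Matrix.mul_assoc, hPinvT, Matrix.mul_one]

end Forms

section Kron

variable {R : Type*} [CommRing R] {a b : ℕ}

theorem kron_eq_reindexRingEquiv (A : Matrix (Fin a) (Fin a) R) (B : Matrix (Fin b) (Fin b) R) :
    kron A B = reindexRingEquiv R finProdFinEquiv (kroneckerMap (· * ·) A B) := rfl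

theorem kron_mul (A A' : Matrix (Fin a) (Fin a) R) (B B' : Matrix (Fin b) (Fin b) R) :
    kron A B * kron A' B' = kron (A * A') (B * B') := by
  rw [kron_eq_reindexRingEquiv, kron_eq_reindexRingEquiv, kron_eq_reindexRingEquiv, ← map_mul,
    mul_kronecker_mul]

theorem kron_transpose (A : Matrix (Fin a) (Fin a) R) (B : Matrix (Fin b) (Fin b) R) :
    (kron A B)ᵀ = kron Aᵀ Bᵀ := by
  rw [kron, kron, transpose_reindex, kroneckerMap_transpose]

theorem det_kron (A : Matrix (Fin a) (Fin a) R) (B : Matrix (Fin b) (Fin b) R) :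
    (kron A B).det = A.det ^ b * B.det ^ a := by
  rw [kron, det_reindex_self, det_kronecker, Fintype.card_fin, Fintype.card_fin]

theorem PreservesForm.kron {M A : Matrix (Fin a) (Fin a) R} {N B : Matrix (Fin b) (Fin b) R}
    (hA : PreservesForm M A) (hB : PreservesForm N B) :
    PreservesForm (_root_.kron M N) (_root_.kron A B) := by
  rw [PreservesForm, kron_transpose, kron_mul, kron_mul, hA, hB]

end Kron

def psiSign (F : Type*) [CommRing F] (n : ℕ) (i : Fin (2*n)) : F :=
  if (i : ℕ) < n then 1 else -1

/-- Row `(i, r)` of `Pmat` has its nonzero entry in column `pmatIndex n m (i, r)`: the block `i`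
is kept, and within it `J` (for `i < n`) reverses the second half of `Fin 2m`, `K` the first. -/
def pmatIndex (n m : ℕ) (x : Fin (2*n) × Fin (2*m)) : Fin (2*n) × Fin (2*m) :=
  (x.1,
    if (x.1 : ℕ) < n then
      (if h : (x.2 : ℕ) < m then x.2 else ⟨3*m-1-(x.2:ℕ), by have := x.2.isLt; omega⟩)
    else
      (if h : (x.2 : ℕ) < m then ⟨m-1-(x.2:ℕ), by omega⟩ else x.2))

def pmatSign (F : Type*) [CommRing F] (n m : ℕ) (x : Fin (2*n) × Fin (2*m)) : F :=
  if (x.1 : ℕ) < n ∧ m ≤ (x.2 : ℕ) then -1 else 1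

section SignedPermutations

variable {F : Type*} [CommRing F]

@[simp] theorem pmatIndex_fst (n m : ℕ) (x : Fin (2*n) × Fin (2*m)) :
    (pmatIndex n m x).1 = x.1 := rfl

@[simp] theorem pmatIndex_snd_val (n m : ℕ) (x : Fin (2*n) × Fin (2*m)) :
    ((pmatIndex n m x).2 : ℕ)
      = if (x.1 : ℕ) < n then (if (x.2 : ℕ) < m then (x.2:ℕ) else 3*m-1-(x.2:ℕ))
        else (if (x.2 : ℕ) < m then m-1-(x.2:ℕ) else (x.2:ℕ)) := by
  simp only [pmatIndex]
  split_ifs <;> rfl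

theorem pmatIndex_involutive (n m : ℕ) : Function.Involutive (pmatIndex n m) := by
  intro x
  have := x.2.isLt
  refine Prod.ext rfl (Fin.ext ?_)
  simp only [pmatIndex_snd_val, pmatIndex_fst]
  split_ifs <;> omega

theorem pmatSign_pmatIndex (n m : ℕ) (x : Fin (2*n) × Fin (2*m)) :
    pmatSign F n m (pmatIndex n m x) = pmatSign F n m x := by
  have := x.2.isLt
  simp only [pmatSign, pmatIndex_fst, pmatIndex_snd_val]
  split_ifs <;> first | rfl | omega

theorem pmatSign_mul_self (n m : ℕ) (x : Fin (2*n) × Fin (2*m)) :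
    pmatSign F n m x * pmatSign F n m x = 1 := by
  simp only [pmatSign]
  split_ifs <;> ring

theorem pmatIndex_rev_pmatIndex (n m : ℕ) (x : Fin (2*n) × Fin (2*m)) :
    pmatIndex n m (Prod.map Fin.rev Fin.rev (pmatIndex n m x)) = Prod.map Fin.rev Fin.rev x := by
  have := x.1.isLt; have := x.2.isLt
  refine Prod.ext rfl (Fin.ext ?_)
  simp only [pmatIndex_snd_val, pmatIndex_fst, Prod.map_fst, Prod.map_snd, Fin.val_rev]
  split_ifs <;> omega

theorem pmatSign_mul_pmatSign_rev (n m : ℕ) (x : Fin (2*n) × Fin (2*m)) :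
    pmatSign F n m x * pmatSign F n m (Prod.map Fin.rev Fin.rev x)
      = psiSign F n x.1 * psiSign F m x.2 := by
  have := x.1.isLt; have := x.2.isLt
  simp only [pmatSign, psiSign, Prod.map_fst, Prod.map_snd, Fin.val_rev]
  split_ifs <;> first | ring1 | omega

theorem psiSign_mul_psiSign_rev (n : ℕ) (i : Fin (2*n)) :
    psiSign F n i * psiSign F n i.rev = -1 := by
  have := i.isLt
  simp only [psiSign, Fin.val_rev]
  split_ifs <;> first | ring1 | omega

end SignedPermutations

section Presentations

variable {F : Type*} [CommRing F]

theorem omegaMat_eq_monomialMatrix (d : ℕ) : omegaMat F d = monomialMatrix Fin.rev 1 := by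
  ext p q
  have := p.isLt; have := q.isLt
  simp only [omegaMat, monomialMatrix_apply, Fin.ext_iff, Fin.val_rev, Pi.one_apply]
  split_ifs <;> first | rfl | omega

theorem PsiMat_eq_monomialMatrix (n : ℕ) : PsiMat F n = monomialMatrix Fin.rev (psiSign F n) := by
  ext p q
  have := p.isLt; have := q.isLt
  simp only [PsiMat, monomialMatrix_apply, psiSign, Fin.ext_iff, Fin.val_rev]
  split_ifs <;> first | rfl | omega

theorem finProdFinEquiv_rev {a b : ℕ} (i : Fin a) (r : Fin b) :
    finProdFinEquiv (i.rev, r.rev) = (finProdFinEquiv (i, r)).rev := by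
  have hi := i.isLt; have hr := r.isLt
  ext
  simp only [finProdFinEquiv_apply_val, Fin.val_rev]
  have hib : (r : ℕ) + b * i + 1 ≤ a * b := by nlinarith
  have hi' : (i : ℕ) + 1 ≤ a := hi
  have hr' : (r : ℕ) + 1 ≤ b := hr
  zify [hi', hr', hib]
  ring

theorem omegaMat_mul_eq_reindexRingEquiv (a b : ℕ) :
    omegaMat F (a*b)
      = reindexRingEquiv F finProdFinEquiv (monomialMatrix (Prod.map Fin.rev Fin.rev) 1) := by
  rw [omegaMat_eq_monomialMatrix, coe_reindexRingEquiv, reindex_monomialMatrix]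
  congr 1
  funext p
  simp only [Function.comp_apply, Prod.map]
  rw [finProdFinEquiv_rev, Prod.mk.eta, Equiv.apply_symm_apply]

theorem Pmat_apply_finProdFinEquiv (n m : ℕ) (x y : Fin (2*n) × Fin (2*m)) :
    Pmat F n m (finProdFinEquiv x) (finProdFinEquiv y)
      = monomialMatrix (pmatIndex n m) (pmatSign F n m) x y := by
  obtain ⟨i, r⟩ := x; obtain ⟨j, c⟩ := y
  have hr := r.isLt; have hc := c.isLt
  have hdiv : ∀ (k : Fin (2*n)) {t : ℕ}, t < 2*m → (t + 2*m*k) / (2*m) = k := fun k t ht => by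
    rw [Nat.add_mul_div_left _ _ (by omega), Nat.div_eq_of_lt ht, Nat.zero_add]
  have hmod : ∀ (k : Fin (2*n)) {t : ℕ}, t < 2*m → (t + 2*m*k) % (2*m) = t := fun k t ht => by
    rw [Nat.add_mul_mod_self_left, Nat.mod_eq_of_lt ht]
  simp only [Pmat, finProdFinEquiv_apply_val, hdiv _ hr, hdiv _ hc, hmod _ hr, hmod _ hc,
    monomialMatrix_apply, Prod.ext_iff, Fin.ext_iff, pmatIndex_fst, pmatIndex_snd_val, pmatSign,
    Jent, Kent]
  split_ifs <;> first | rfl | omega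

theorem Pmat_eq_reindexRingEquiv (n m : ℕ) :
    Pmat F n m
      = reindexRingEquiv F finProdFinEquiv (monomialMatrix (pmatIndex n m) (pmatSign F n m)) := by
  ext p q
  rw [coe_reindexRingEquiv, reindex_apply, submatrix_apply, ← Pmat_apply_finProdFinEquiv,
    Equiv.apply_symm_apply, Equiv.apply_symm_apply]

end Presentations

section Identities

variable {F : Type*} [CommRing F]

theorem PsiMat_mul_self (n : ℕ) : PsiMat F n * PsiMat F n = -1 := by
  ext p q
  rw [PsiMat_eq_monomialMatrix, monomialMatrix_mul, monomialMatrix_apply, Function.comp_apply,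
    Fin.rev_rev, psiSign_mul_psiSign_rev, neg_apply, one_apply]
  split_ifs <;> simp_all

theorem isUnit_det_PsiMat (n : ℕ) : IsUnit (PsiMat F n).det := by
  have h : IsUnit ((PsiMat F n).det * (PsiMat F n).det) := by
    rw [← det_mul, PsiMat_mul_self, det_neg, det_one, mul_one]
    exact isUnit_neg_one.pow _
  exact isUnit_of_mul_isUnit_left h

theorem Pmat_mul_self (n m : ℕ) : Pmat F n m * Pmat F n m = 1 := by
  rw [Pmat_eq_reindexRingEquiv, ← map_mul, ← map_one (reindexRingEquiv F finProdFinEquiv)]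
  congr 1
  refine monomialMatrix_mul_self_eq_one (pmatIndex_involutive n m) fun x => ?_
  rw [pmatSign_pmatIndex, pmatSign_mul_self]

theorem transpose_Pmat (n m : ℕ) : (Pmat F n m)ᵀ = Pmat F n m := by
  rw [Pmat_eq_reindexRingEquiv, coe_reindexRingEquiv, transpose_reindex,
    transpose_monomialMatrix (pmatIndex_involutive n m)]
  congr 2
  exact funext (pmatSign_pmatIndex n m)

theorem Pmat_mul_omegaMat_mul_transpose (n m : ℕ) :
    Pmat F n m * omegaMat F ((2*n)*(2*m)) * (Pmat F n m)ᵀ = kron (PsiMat F n) (PsiMat F m) := by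
  rw [transpose_Pmat, Pmat_eq_reindexRingEquiv, omegaMat_mul_eq_reindexRingEquiv, ← map_mul,
    ← map_mul, kron_eq_reindexRingEquiv, PsiMat_eq_monomialMatrix, PsiMat_eq_monomialMatrix,
    kroneckerMap_monomialMatrix, monomialMatrix_mul, monomialMatrix_mul]
  congr 2
  · exact funext (pmatIndex_rev_pmatIndex n m)
  · funext x
    rw [Function.comp_apply, Pi.one_apply, mul_one,
      ← pmatSign_pmatIndex n m (Prod.map Fin.rev Fin.rev _), pmatIndex_rev_pmatIndex,
      pmatSign_mul_pmatSign_rev]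

end Identities

theorem Pmat_conj_kron_mem_SO_general (F : Type*) [Field F] (n m : ℕ) :
    IsUnit (Pmat F n m) ∧
    Pmat F n m * Pmat F n m = 1 ∧
    Pmat F n m * omegaMat F ((2*n)*(2*m)) * (Pmat F n m)ᵀ
        = kron (PsiMat F n) (PsiMat F m) ∧
    ∀ A ∈ SpSet F n, ∀ B ∈ SpSet F m,
      (Pmat F n m)⁻¹ * kron A B * Pmat F n m ∈ SOset F ((2*n)*(2*m)) := by
  have hPP := Pmat_mul_self (F := F) n m
  have hP : IsUnit (Pmat F n m) := .of_mul_eq_one _ hPP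
  have hPΩ := Pmat_mul_omegaMat_mul_transpose (F := F) n m
  refine ⟨hP, hPP, hPΩ, fun A hA B hB =>
    ⟨PreservesForm.conj hP hPΩ (PreservesForm.kron hA hB), ?_⟩⟩
  have hA2 : A.det ^ 2 = 1 := PreservesForm.det_sq_eq_one (isUnit_det_PsiMat n) hA
  have hB2 : B.det ^ 2 = 1 := PreservesForm.det_sq_eq_one (isUnit_det_PsiMat m) hB
  rw [det_conj' hP, det_kron, pow_mul, pow_mul, hA2, hB2, one_pow, one_pow, one_mul]

/-- the block-diagonal matrix `P` (blocks `J`, then `K`) is invertible with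
`P² = I`, satisfies `P · Ω_{4nm} · Pᵀ = Ψ_{2n} ⊗ Ψ_{2m}`, and conjugating the Kronecker
product of symplectic matrices by `P` lands in `SO_{4nm}(F)`. -/
theorem Pmat_conj_kron_mem_SO (F : Type*) [Field F] (n m : ℕ) (hn : 1 ≤ n) (hm : 1 ≤ m) :
    IsUnit (Pmat F n m) ∧
    Pmat F n m * Pmat F n m = 1 ∧
    Pmat F n m * omegaMat F ((2*n)*(2*m)) * (Pmat F n m)ᵀ
        = kron (PsiMat F n) (PsiMat F m) ∧
    ∀ A ∈ SpSet F n, ∀ B ∈ SpSet F m,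
      (Pmat F n m)⁻¹ * kron A B * Pmat F n m ∈ SOset F ((2*n)*(2*m)) :=
  Pmat_conj_kron_mem_SO_general F n m
end

section
/- Let F be a field of characteristic different from 2 and n, m ≥ 1. For A ∈ SO_n(F) and B ∈ SO_m(F), one has A ⊗ B = I_{nm} if and only if either (A, B) = (I_n, I_m), or n and m are both even and (A, B) = (−I_n, −I_m). In other words, the kernel of the Kronecker tensor product map ρ_SO : SO_n(F) × SO_m(F) → SO_{nm}(F) is {(I,I)} when n or m is odd, and {(I,I), (−I,−I)} when n and m are both even. -/
open Matrix

/-! If `A ⊗ B = 1`, then comparing the entries `(i, k), (j, k)` shows that `A` is scalar, and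
symmetrically `B`, so `(A, B) = (c • 1, c⁻¹ • 1)`. The relation `(c • 1) Ω (c • 1)ᵀ = Ω` forces
`c² = 1`, i.e. `c = ±1`, and for `c = -1` the determinant condition `(-1)ⁿ = 1` forces `n` (and
`m`) even, since `-1 ≠ 1` outside characteristic 2. -/

open scoped Kronecker

lemma kron_eq_one_iff {R : Type*} [CommRing R] {n m : ℕ} {A : Matrix (Fin n) (Fin n) R}
    {B : Matrix (Fin m) (Fin m) R} : kron A B = 1 ↔ A ⊗ₖ B = 1 :=
  (reindex finProdFinEquiv finProdFinEquiv).injective.eq_iff' (submatrix_one_equiv _)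

section Kronecker

variable {R K : Type*} [CommRing R] [Field K] {ι κ : Type*} [DecidableEq ι] [DecidableEq κ]

lemma neg_one_kronecker_neg_one :
    (-1 : Matrix ι ι R) ⊗ₖ (-1 : Matrix κ κ R) = 1 := by
  rw [← neg_one_smul R (1 : Matrix ι ι R), ← neg_one_smul R (1 : Matrix κ κ R), smul_kronecker,
    kronecker_smul, one_kronecker_one, smul_smul, neg_one_mul, neg_neg, one_smul]

lemma eq_inv_smul_one_of_forall_mul_eq_one_apply {A : Matrix ι ι K} {b : K}
    (h : ∀ i j, A i j * b = (1 : Matrix ι ι K) i j) : A = b⁻¹ • 1 := by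
  ext i j
  have hb : b ≠ 0 := right_ne_zero_of_mul_eq_one (by simpa using h i i)
  rw [eq_mul_inv_iff_mul_eq₀ hb |>.mpr (h i j), Matrix.smul_apply, smul_eq_mul, mul_comm]

lemma eq_inv_smul_one_of_kronecker_eq_one_left {A : Matrix ι ι K} {B : Matrix κ κ K}
    (h : A ⊗ₖ B = 1) (k : κ) : A = (B k k)⁻¹ • 1 :=
  eq_inv_smul_one_of_forall_mul_eq_one_apply fun i j => by
    simpa [one_apply, Prod.ext_iff] using congrFun (congrFun h (i, k)) (j, k)

lemma eq_inv_smul_one_of_kronecker_eq_one_right {A : Matrix ι ι K} {B : Matrix κ κ K}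
    (h : A ⊗ₖ B = 1) (i : ι) : B = (A i i)⁻¹ • 1 :=
  eq_inv_smul_one_of_forall_mul_eq_one_apply fun k l => by
    simpa [one_apply, Prod.ext_iff, mul_comm] using congrFun (congrFun h (i, k)) (i, l)

end Kronecker

section SOset

variable {F : Type*} [CommRing F] {d : ℕ}

lemma omegaMat_zero_last (hd : 0 < d) : omegaMat F d ⟨0, hd⟩ ⟨d - 1, by omega⟩ = 1 := by
  simp [omegaMat, Nat.sub_add_cancel hd]

lemma mul_self_eq_one_of_smul_one_mem_SOset (hd : 0 < d) {c : F}
    (h : c • (1 : Matrix (Fin d) (Fin d) F) ∈ SOset F d) : c * c = 1 := by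
  have hΩ : (c * c) • omegaMat F d = omegaMat F d := by
    have h₁ := h.1
    rwa [transpose_smul, transpose_one, Matrix.smul_mul, one_mul, Matrix.mul_smul, mul_one,
      smul_smul] at h₁
  simpa [omegaMat_zero_last hd] using congrFun (congrFun hΩ ⟨0, hd⟩) ⟨d - 1, by omega⟩

lemma even_of_neg_one_mem_SOset [Nontrivial F] (hchar : ringChar F ≠ 2)
    (h : (-1 : Matrix (Fin d) (Fin d) F) ∈ SOset F d) : Even d := by
  have hdet := h.2
  rw [det_neg, det_one, mul_one, Fintype.card_fin] at hdet
  exact (neg_one_pow_eq_one_iff_even (Ring.neg_one_ne_one_of_char_ne_two hchar)).mp hdet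

end SOset

/-- over a field of characteristic ≠ 2, the kernel of the Kronecker tensor
product map `ρ_SO : SO_n(F) × SO_m(F) → SO_{nm}(F)` is `{(I,I)}` when `n` or `m` is odd,
and `{(I,I), (−I,−I)}` when `n` and `m` are both even. -/
theorem kron_so_eq_one_iff (F : Type*) [Field F] (hchar : ringChar F ≠ 2)
    (n m : ℕ) (hn : 1 ≤ n) (hm : 1 ≤ m)
    (A : Matrix (Fin n) (Fin n) F) (B : Matrix (Fin m) (Fin m) F)
    (hA : A ∈ SOset F n) (hB : B ∈ SOset F m) :
    kron A B = 1 ↔ (A = 1 ∧ B = 1) ∨ (Even n ∧ Even m ∧ A = -1 ∧ B = -1) := by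
  rw [kron_eq_one_iff]
  constructor
  · intro h
    set c := (B ⟨0, hm⟩ ⟨0, hm⟩)⁻¹
    have hAc : A = c • 1 := eq_inv_smul_one_of_kronecker_eq_one_left h _
    have hBc : B = c⁻¹ • 1 := by
      rw [eq_inv_smul_one_of_kronecker_eq_one_right h ⟨0, hn⟩, hAc]
      simp
    have hc : c * c = 1 := mul_self_eq_one_of_smul_one_mem_SOset hn (hAc ▸ hA)
    rcases mul_self_eq_one_iff.mp hc with hc | hc
    · left
      simp [hAc, hBc, hc]
    · have hA' : A = -1 := by simp [hAc, hc]
      have hB' : B = -1 := by simp [hBc, hc]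
      exact .inr ⟨even_of_neg_one_mem_SOset hchar (hA' ▸ hA),
        even_of_neg_one_mem_SOset hchar (hB' ▸ hB), hA', hB'⟩
  · rintro (⟨rfl, rfl⟩ | ⟨-, -, rfl, rfl⟩)
    · exact one_kronecker_one
    · exact neg_one_kronecker_neg_one
end

section
/- Let F be a field, n, m ≥ 1, 1 ≤ i < j ≤ n, and t ∈ F. Write x^{(d)}_α(t) for the orthogonal Chevalley generators in M_d(F). Then, under the lexicographic identification of Kronecker products, the following identities hold in M_{4nm}(F): x^{(2n)}_{e_i−e_j}(t) ⊗ I_{2m} = ∏_{k=1}^{2m} x^{(4nm)}_{e_{2m(i−1)+k} − e_{2m(j−1)+k}}(t) and x^{(2n)}_{e_i+e_j}(t) ⊗ I_{2m} = ∏_{k=1}^{2m} x^{(4nm)}_{e_{2m(i−1)+k} + e_{2m(j−1)+(2m+1−k)}}(t); in each product the factors pairwise commute, so the order of multiplication is immaterial. (These are the formulas for the images ρ_SO(x_{e_i−e_j}(t), I) and ρ_SO(x_{e_i+e_j}(t), I) of the Kronecker tensor product map SO_{2n} × SO_{2m} → SO_{4nm}.) -/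
open Matrix

/-- Symplectic Chevalley generator `x_{e_i−e_j}(t) = I + t(E_{i,j} − E_{2n+1−j,2n+1−i})`. -/
def xCsub (F : Type*) [CommRing F] (n i j : ℕ) (t : F) : Matrix (Fin (2*n)) (Fin (2*n)) F :=
  1 + t • (Eunit F (2*n) i j - Eunit F (2*n) (2*n+1-j) (2*n+1-i))

/-- Symplectic Chevalley generator `x_{e_i+e_j}(t) = I + t(E_{i,2n+1−j} + E_{j,2n+1−i})`. -/
def xCadd (F : Type*) [CommRing F] (n i j : ℕ) (t : F) : Matrix (Fin (2*n)) (Fin (2*n)) F :=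
  1 + t • (Eunit F (2*n) i (2*n+1-j) + Eunit F (2*n) j (2*n+1-i))

/-- Symplectic Chevalley generator `x_{2e_j}(t) = I + t·E_{j,2n+1−j}`. -/
def xClong (F : Type*) [CommRing F] (n j : ℕ) (t : F) : Matrix (Fin (2*n)) (Fin (2*n)) F :=
  1 + t • Eunit F (2*n) j (2*n+1-j)

/-- Signed symplectic generator `x_{a₁e_i + a₂e_j}(t)` for `i < j` and `a₁, a₂ ∈ {1,−1}`,
using the convention `x_{−α}(t) = x_α(t)ᵀ`. -/
def xCs (F : Type*) [CommRing F] (n i j : ℕ) (a₁ a₂ : ℤ) (t : F) :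
    Matrix (Fin (2*n)) (Fin (2*n)) F :=
  if a₁ = 1 then (if a₂ = 1 then xCadd F n i j t else xCsub F n i j t)
  else (if a₂ = 1 then (xCsub F n i j t)ᵀ else (xCadd F n i j t)ᵀ)

/-- Signed symplectic generator `x_{2a e_j}(t)` for `a ∈ {1,−1}`. -/
def xCls (F : Type*) [CommRing F] (n j : ℕ) (a : ℤ) (t : F) :
    Matrix (Fin (2*n)) (Fin (2*n)) F :=
  if a = 1 then xClong F n j t else (xClong F n j t)ᵀ

/-- Orthogonal Chevalley generator `x_{e_i−e_j}(t) = I + t(E_{i,j} − E_{d+1−j,d+1−i})`. -/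
def xDsub (F : Type*) [CommRing F] (d i j : ℕ) (t : F) : Matrix (Fin d) (Fin d) F :=
  1 + t • (Eunit F d i j - Eunit F d (d+1-j) (d+1-i))

/-- Orthogonal Chevalley generator `x_{e_i+e_j}(t) = I + t(E_{i,d+1−j} − E_{j,d+1−i})`. -/
def xDadd (F : Type*) [CommRing F] (d i j : ℕ) (t : F) : Matrix (Fin d) (Fin d) F :=
  1 + t • (Eunit F d i (d+1-j) - Eunit F d j (d+1-i))

/-- Signed orthogonal generator `x_{a₁e_i + a₂e_j}(t)` in `M_d(F)`, for `i < j` and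
`a₁, a₂ ∈ {1,−1}`, with the convention `x_{−α}(t) = x_α(t)ᵀ`. -/
def xDs (F : Type*) [CommRing F] (d i j : ℕ) (a₁ a₂ : ℤ) (t : F) :
    Matrix (Fin d) (Fin d) F :=
  if a₁ = 1 then (if a₂ = 1 then xDadd F d i j t else xDsub F d i j t)
  else (if a₂ = 1 then (xDsub F d i j t)ᵀ else (xDadd F d i j t)ᵀ)

/-- Short orthogonal Chevalley generator
`x_{e_j}(t) = I + s·t·E_{j,n+1} − s·t·E_{n+1,2n+2−j} − t²·E_{j,2n+2−j}` in `M_{2n+1}(F)`,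
where `s² = 2`. -/
def xBshort (F : Type*) [CommRing F] (n : ℕ) (s : F) (j : ℕ) (t : F) :
    Matrix (Fin (2*n+1)) (Fin (2*n+1)) F :=
  1 + (s*t) • Eunit F (2*n+1) j (n+1) - (s*t) • Eunit F (2*n+1) (n+1) (2*n+2-j)
    - (t^2) • Eunit F (2*n+1) j (2*n+2-j)

/-- Signed short orthogonal generator `x_{a e_j}(t)` for `a ∈ {1,−1}`. -/
def xBs (F : Type*) [CommRing F] (n : ℕ) (s : F) (j : ℕ) (a : ℤ) (t : F) :
    Matrix (Fin (2*n+1)) (Fin (2*n+1)) F :=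
  if a = 1 then xBshort F n s j t else (xBshort F n s j t)ᵀ

/-- The commutator `(g,h) = g·h·g⁻¹·h⁻¹`. -/
noncomputable def mcomm {F : Type*} [Field F] {d : ℕ} (g h : Matrix (Fin d) (Fin d) F) :
    Matrix (Fin d) (Fin d) F :=
  g * h * g⁻¹ * h⁻¹

section KronHelpers

variable {F : Type*} [CommRing F]

private lemma listSumMulZero {R : Type*} [Ring R] (a : R) :
    ∀ (L : List R), (∀ y ∈ L, a * y = 0) → a * L.sum = 0 := by
  intro L
  induction L with
  | nil => simp
  | cons x L ih =>
    intro h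
    simp only [List.sum_cons, mul_add, h x (by simp), ih (fun y hy => h y (by simp [hy])),
      add_zero]

private lemma listProdOneAdd {R : Type*} [Ring R] :
    ∀ (L : List R), (∀ x ∈ L, ∀ y ∈ L, x * y = 0) →
      (L.map (fun M => 1 + M)).prod = 1 + L.sum := by
  intro L
  induction L with
  | nil => simp
  | cons x L ih =>
    intro h
    have hx : x * L.sum = 0 := listSumMulZero x L (fun y hy => h x (by simp) y (by simp [hy]))
    simp only [List.map_cons, List.prod_cons, List.sum_cons,
      ih (fun a ha b hb => h a (by simp [ha]) b (by simp [hb]))]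
    rw [add_mul, one_mul, mul_add, mul_one, hx]
    abel

private lemma listRangeSum {R : Type*} [AddCommMonoid R] (N : ℕ) (g : ℕ → R) :
    ((List.range N).map g).sum = ∑ k ∈ Finset.range N, g k := by
  induction N with
  | zero => simp
  | succ N ih => rw [List.range_succ, Finset.sum_range_succ, ← ih]; simp

private lemma commuteOneAdd {R : Type*} [Ring R] {A B : R} (h1 : A * B = 0) (h2 : B * A = 0) :
    Commute (1 + A) (1 + B) := by
  show (1 + A) * (1 + B) = (1 + B) * (1 + A)
  rw [mul_add, mul_one, add_mul, one_mul, h1, add_zero,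
    mul_add, mul_one, add_mul, one_mul, h2, add_zero]
  abel

private lemma decUniq {m x y r s : ℕ} (hr : r < m) (hs : s < m) (h : m * x + r = m * y + s) :
    x = y ∧ r = s := by
  have hm : 0 < m := by omega
  have hx : (m * x + r) / m = x := by
    rw [Nat.mul_add_div hm, Nat.div_eq_of_lt hr, add_zero]
  have hy : (m * y + s) / m = y := by
    rw [Nat.mul_add_div hm, Nat.div_eq_of_lt hs, add_zero]
  have hxy : x = y := by rw [← hx, ← hy, h]
  subst hxy
  exact ⟨rfl, Nat.add_left_cancel h⟩

private lemma kron_add_left {n m : ℕ} (A B : Matrix (Fin n) (Fin n) F)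
    (C : Matrix (Fin m) (Fin m) F) : kron (A + B) C = kron A C + kron B C := by
  ext p q
  simp [kron, add_mul]

private lemma kron_sub_left {n m : ℕ} (A B : Matrix (Fin n) (Fin n) F)
    (C : Matrix (Fin m) (Fin m) F) : kron (A - B) C = kron A C - kron B C := by
  ext p q
  simp [kron, sub_mul]

private lemma kron_smul_left {n m : ℕ} (t : F) (A : Matrix (Fin n) (Fin n) F)
    (C : Matrix (Fin m) (Fin m) F) : kron (t • A) C = t • kron A C := by
  ext p q
  simp [kron, mul_assoc]

private lemma kron_one_one {n m : ℕ} :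
    kron (1 : Matrix (Fin n) (Fin n) F) (1 : Matrix (Fin m) (Fin m) F) = 1 := by
  have h : Matrix.kroneckerMap (· * ·) (1 : Matrix (Fin n) (Fin n) F)
      (1 : Matrix (Fin m) (Fin m) F) = 1 := Matrix.one_kronecker_one
  rw [kron, h, Matrix.reindex_apply, Matrix.submatrix_one_equiv]

private lemma kronEunit {n m : ℕ} (a b : ℕ) (ha : 1 ≤ a) (hb : 1 ≤ b) :
    kron (Eunit F n a b) (1 : Matrix (Fin m) (Fin m) F)
      = ∑ k ∈ Finset.range m, Eunit F (n*m) (m*(a-1)+(k+1)) (m*(b-1)+(k+1)) := by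
  obtain ⟨a', rfl⟩ : ∃ a', a = a' + 1 := ⟨a - 1, by omega⟩
  obtain ⟨b', rfl⟩ : ∃ b', b = b' + 1 := ⟨b - 1, by omega⟩
  simp only [Nat.add_sub_cancel]
  ext p q
  obtain ⟨p1, p2, rfl⟩ : ∃ (p1 : Fin n) (p2 : Fin m), finProdFinEquiv (p1, p2) = p :=
    ⟨(finProdFinEquiv.symm p).1, (finProdFinEquiv.symm p).2, finProdFinEquiv.apply_symm_apply p⟩
  obtain ⟨q1, q2, rfl⟩ : ∃ (q1 : Fin n) (q2 : Fin m), finProdFinEquiv (q1, q2) = q :=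
    ⟨(finProdFinEquiv.symm q).1, (finProdFinEquiv.symm q).2, finProdFinEquiv.apply_symm_apply q⟩
  have hpv : ((finProdFinEquiv (p1, p2) : Fin (n*m)) : ℕ) = m * (p1 : ℕ) + (p2 : ℕ) := by
    simp [finProdFinEquiv]; ring
  have hqv : ((finProdFinEquiv (q1, q2) : Fin (n*m)) : ℕ) = m * (q1 : ℕ) + (q2 : ℕ) := by
    simp [finProdFinEquiv]; ring
  simp only [kron, Matrix.reindex_apply, Matrix.submatrix_apply, Equiv.symm_apply_apply,
    Matrix.kroneckerMap_apply, Matrix.sum_apply, Eunit, Matrix.one_apply, hpv, hqv]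
  by_cases hC : (p1 : ℕ) + 1 = a' + 1 ∧ (q1 : ℕ) + 1 = b' + 1 ∧ p2 = q2
  · rw [if_pos ⟨hC.1, hC.2.1⟩, if_pos hC.2.2, one_mul]
    rw [Finset.sum_eq_single_of_mem (p2 : ℕ) (Finset.mem_range.mpr p2.isLt)]
    · rw [if_pos]
      have h1 : (p1 : ℕ) = a' := by omega
      have h2 : (q1 : ℕ) = b' := by omega
      have h3 : (q2 : ℕ) = (p2 : ℕ) := by rw [← hC.2.2]
      rw [h1, h2, h3]
      exact ⟨by ring, by ring⟩
    · intro k hk hne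
      rw [if_neg]
      rintro ⟨h1, -⟩
      have := (decUniq p2.isLt (Finset.mem_range.mp hk)
        (show m * (p1 : ℕ) + (p2 : ℕ) = m * a' + k by linarith)).2
      omega
  · have hL : (if (p1 : ℕ) + 1 = a' + 1 ∧ (q1 : ℕ) + 1 = b' + 1 then (1:F) else 0) *
        (if p2 = q2 then (1:F) else 0) = 0 := by
      split_ifs with h1 h2
      · exact absurd ⟨h1.1, h1.2, h2⟩ hC
      · exact mul_zero _
      · exact zero_mul _
      · exact zero_mul _
    rw [hL]
    symm
    apply Finset.sum_eq_zero
    intro k hk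
    rw [if_neg]
    rintro ⟨h1, h2⟩
    have e1 := decUniq p2.isLt (Finset.mem_range.mp hk)
      (show m * (p1 : ℕ) + (p2 : ℕ) = m * a' + k by linarith)
    have e2 := decUniq q2.isLt (Finset.mem_range.mp hk)
      (show m * (q1 : ℕ) + (q2 : ℕ) = m * b' + k by linarith)
    exact hC ⟨by omega, by omega, Fin.ext (by omega)⟩

private lemma eunitMulNe {d : ℕ} {b c : ℕ} (a e : ℕ) (h : b ≠ c) :
    Eunit F d a b * Eunit F d c e = 0 := by
  ext p q
  rw [Matrix.mul_apply]
  apply Finset.sum_eq_zero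
  intro r _
  simp only [Eunit, Matrix.zero_apply]
  split_ifs with h1 h2 h2 <;> first | (exfalso; omega) | simp

private lemma blockNe {m p q r s : ℕ} (hpq : p < q) (hrm : r ≤ 2*m) (hs : 1 ≤ s) :
    2*m*p + r ≠ 2*m*q + s := by
  have h : 2*m*p + 2*m ≤ 2*m*q := by
    calc 2*m*p + 2*m = 2*m*(p+1) := by ring
    _ ≤ 2*m*q := Nat.mul_le_mul_left _ hpq
  intro hcon
  linarith

private lemma idxbar {m n x r : ℕ} (hx1 : 1 ≤ x) (hxn : x ≤ 2*n) (hrm : r ≤ 2*m) :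
    2*n*(2*m)+1 - (2*m*(x-1)+r) = 2*m*(2*n-x) + (2*m+1-r) := by
  obtain ⟨x', rfl⟩ : ∃ x', x = x'+1 := ⟨x-1, by omega⟩
  obtain ⟨c, hc⟩ : ∃ c, 2*n = x'+1+c := ⟨2*n-(x'+1), by omega⟩
  simp only [Nat.add_sub_cancel]
  have h1 : 2*n - (x'+1) = c := by omega
  rw [h1, hc]
  have h2 : (x'+1+c)*(2*m) = 2*m*x' + 2*m + 2*m*c := by ring
  rw [h2]
  obtain ⟨A, hA⟩ : ∃ A, 2*m*x' = A := ⟨_, rfl⟩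
  obtain ⟨B, hB⟩ : ∃ B, 2*m*c = B := ⟨_, rfl⟩
  rw [hA, hB]
  omega

private lemma idxbar' {m n x r : ℕ} (hx1 : 1 ≤ x) (hxn : x ≤ 2*n) (hr1 : 1 ≤ r)
    (hrm : r ≤ 2*m) :
    2*n*(2*m)+1 - (2*m*(x-1)+(2*m+1-r)) = 2*m*(2*n-x) + r := by
  rw [idxbar hx1 hxn (by omega)]
  congr 1
  omega

/-- difference part of the `f` factors -/
private def MfD (F : Type*) [CommRing F] (n m i j k : ℕ) (t : F) :
    Matrix (Fin ((2*n)*(2*m))) (Fin ((2*n)*(2*m))) F :=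
  t • (Eunit F ((2*n)*(2*m)) (2*m*(i-1)+k) (2*m*(j-1)+k)
     - Eunit F ((2*n)*(2*m)) ((2*n)*(2*m)+1-(2*m*(j-1)+k)) ((2*n)*(2*m)+1-(2*m*(i-1)+k)))

/-- difference part of the `g` factors -/
private def MgD (F : Type*) [CommRing F] (n m i j k : ℕ) (t : F) :
    Matrix (Fin ((2*n)*(2*m))) (Fin ((2*n)*(2*m))) F :=
  t • (Eunit F ((2*n)*(2*m)) (2*m*(i-1)+k) ((2*n)*(2*m)+1-(2*m*(j-1)+(2*m+1-k)))
     - Eunit F ((2*n)*(2*m)) (2*m*(j-1)+(2*m+1-k)) ((2*n)*(2*m)+1-(2*m*(i-1)+k)))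

variable {n m i j : ℕ} (t : F)

private lemma MfD_mul (hi : 1 ≤ i) (hij : i < j) (hjn : j ≤ n) {k k' : ℕ}
    (hk1 : 1 ≤ k) (hk2 : k ≤ 2*m) (hk1' : 1 ≤ k') (hk2' : k' ≤ 2*m) :
    MfD F n m i j k t * MfD F n m i j k' t = 0 := by
  unfold MfD
  rw [smul_mul_assoc, mul_smul_comm, smul_smul]
  have hD : (2*n)*(2*m) = 2*n*(2*m) := by ring
  rw [hD]
  rw [idxbar (by omega) (by omega) hk2, idxbar (x := i) (by omega) (by omega) hk2,
    idxbar (by omega) (by omega) hk2', idxbar (x := i) (by omega) (by omega) hk2']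
  rw [sub_mul, mul_sub, mul_sub]
  rw [eunitMulNe _ _ ((blockNe (show i-1 < j-1 by omega) hk2' hk1).symm),
    eunitMulNe _ _ (blockNe (show j-1 < 2*n-j by omega) hk2 (by omega)),
    eunitMulNe _ _ ((blockNe (show i-1 < 2*n-i by omega) hk2' (by omega)).symm),
    eunitMulNe _ _ ((blockNe (show 2*n-j < 2*n-i by omega) (by omega) (by omega)).symm)]
  simp

private lemma MgD_mul (hi : 1 ≤ i) (hij : i < j) (hjn : j ≤ n) {k k' : ℕ}
    (hk1 : 1 ≤ k) (hk2 : k ≤ 2*m) (hk1' : 1 ≤ k') (hk2' : k' ≤ 2*m) :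
    MgD F n m i j k t * MgD F n m i j k' t = 0 := by
  unfold MgD
  rw [smul_mul_assoc, mul_smul_comm, smul_smul]
  have hD : (2*n)*(2*m) = 2*n*(2*m) := by ring
  rw [hD]
  rw [idxbar (x := j) (by omega) (by omega) (show 2*m+1-k ≤ 2*m by omega),
    idxbar (x := i) (by omega) (by omega) hk2,
    idxbar (x := j) (by omega) (by omega) (show 2*m+1-k' ≤ 2*m by omega),
    idxbar (x := i) (by omega) (by omega) hk2']
  rw [sub_mul, mul_sub, mul_sub]
  rw [eunitMulNe _ _ ((blockNe (show i-1 < 2*n-j by omega) hk2' (by omega)).symm),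
    eunitMulNe _ _ ((blockNe (show j-1 < 2*n-j by omega) (show 2*m+1-k' ≤ 2*m by omega)
      (by omega)).symm),
    eunitMulNe _ _ ((blockNe (show i-1 < 2*n-i by omega) hk2' (by omega)).symm),
    eunitMulNe _ _ ((blockNe (show j-1 < 2*n-i by omega) (show 2*m+1-k' ≤ 2*m by omega)
      (by omega)).symm)]
  simp

end KronHelpers

section KronMain

variable {F : Type*} [CommRing F] {n m i j : ℕ}

private lemma kron_part1 (hi : 1 ≤ i) (hij : i < j) (hjn : j ≤ n) (t : F) :
    kron (xDsub F (2*n) i j t) (1 : Matrix (Fin (2*m)) (Fin (2*m)) F)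
      = ((List.range (2*m)).map (fun k =>
          xDsub F ((2*n)*(2*m)) (2*m*(i-1)+(k+1)) (2*m*(j-1)+(k+1)) t)).prod := by
  have hmap : (List.range (2*m)).map (fun k =>
        xDsub F ((2*n)*(2*m)) (2*m*(i-1)+(k+1)) (2*m*(j-1)+(k+1)) t)
      = ((List.range (2*m)).map (fun k => MfD F n m i j (k+1) t)).map (fun M => 1 + M) := by
    rw [List.map_map]
    apply List.map_congr_left
    intro k _
    rfl
  have hz : ∀ x ∈ (List.range (2*m)).map (fun k => MfD F n m i j (k+1) t),
      ∀ y ∈ (List.range (2*m)).map (fun k => MfD F n m i j (k+1) t), x * y = 0 := by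
    intro x hx y hy
    obtain ⟨k, hk, rfl⟩ := List.mem_map.mp hx
    obtain ⟨k', hk', rfl⟩ := List.mem_map.mp hy
    have hkr := List.mem_range.mp hk
    have hkr' := List.mem_range.mp hk'
    exact MfD_mul t hi hij hjn (by omega) (by omega) (by omega) (by omega)
  rw [hmap, listProdOneAdd _ hz, listRangeSum]
  rw [show xDsub F (2*n) i j t
    = 1 + t • (Eunit F (2*n) i j - Eunit F (2*n) (2*n+1-j) (2*n+1-i)) from rfl]
  rw [kron_add_left, kron_one_one, kron_smul_left, kron_sub_left,
    kronEunit i j hi (by omega),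
    kronEunit (2*n+1-j) (2*n+1-i) (by omega) (by omega)]
  congr 1
  unfold MfD
  rw [← Finset.smul_sum]
  congr 1
  rw [Finset.sum_sub_distrib]
  congr 1
  have e1 : (2*n+1-j)-1 = 2*n-j := by omega
  have e2 : (2*n+1-i)-1 = 2*n-i := by omega
  rw [e1, e2, ← Finset.sum_range_reflect]
  apply Finset.sum_congr rfl
  intro k hk
  have hkr := Finset.mem_range.mp hk
  have hD : (2*n)*(2*m) = 2*n*(2*m) := by ring
  rw [hD, idxbar (by omega) (by omega) (show k+1 ≤ 2*m by omega),
    idxbar (x := i) (by omega) (by omega) (show k+1 ≤ 2*m by omega)]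
  have e3 : 2*m+1-(k+1) = (2*m-1-k)+1 := by omega
  rw [e3]

private lemma kron_part2 (hi : 1 ≤ i) (hij : i < j) (hjn : j ≤ n) (t : F) :
    kron (xDadd F (2*n) i j t) (1 : Matrix (Fin (2*m)) (Fin (2*m)) F)
      = ((List.range (2*m)).map (fun k =>
          xDadd F ((2*n)*(2*m)) (2*m*(i-1)+(k+1)) (2*m*(j-1)+(2*m+1-(k+1))) t)).prod := by
  have hmap : (List.range (2*m)).map (fun k =>
        xDadd F ((2*n)*(2*m)) (2*m*(i-1)+(k+1)) (2*m*(j-1)+(2*m+1-(k+1))) t)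
      = ((List.range (2*m)).map (fun k => MgD F n m i j (k+1) t)).map (fun M => 1 + M) := by
    rw [List.map_map]
    apply List.map_congr_left
    intro k _
    rfl
  have hz : ∀ x ∈ (List.range (2*m)).map (fun k => MgD F n m i j (k+1) t),
      ∀ y ∈ (List.range (2*m)).map (fun k => MgD F n m i j (k+1) t), x * y = 0 := by
    intro x hx y hy
    obtain ⟨k, hk, rfl⟩ := List.mem_map.mp hx
    obtain ⟨k', hk', rfl⟩ := List.mem_map.mp hy
    have hkr := List.mem_range.mp hk
    have hkr' := List.mem_range.mp hk'
    exact MgD_mul t hi hij hjn (by omega) (by omega) (by omega) (by omega)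
  rw [hmap, listProdOneAdd _ hz, listRangeSum]
  rw [show xDadd F (2*n) i j t
    = 1 + t • (Eunit F (2*n) i (2*n+1-j) - Eunit F (2*n) j (2*n+1-i)) from rfl]
  rw [kron_add_left, kron_one_one, kron_smul_left, kron_sub_left,
    kronEunit i (2*n+1-j) hi (by omega),
    kronEunit j (2*n+1-i) (by omega) (by omega)]
  congr 1
  unfold MgD
  rw [← Finset.smul_sum]
  congr 1
  rw [Finset.sum_sub_distrib]
  congr 1
  · have e1 : (2*n+1-j)-1 = 2*n-j := by omega
    rw [e1]
    apply Finset.sum_congr rfl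
    intro k hk
    have hkr := Finset.mem_range.mp hk
    have hD : (2*n)*(2*m) = 2*n*(2*m) := by ring
    rw [hD, idxbar' (x := j) (by omega) (by omega) (show 1 ≤ k+1 by omega)
      (show k+1 ≤ 2*m by omega)]
  · have e2 : (2*n+1-i)-1 = 2*n-i := by omega
    rw [e2, ← Finset.sum_range_reflect]
    apply Finset.sum_congr rfl
    intro k hk
    have hkr := Finset.mem_range.mp hk
    have hD : (2*n)*(2*m) = 2*n*(2*m) := by ring
    rw [hD, idxbar (x := i) (by omega) (by omega) (show k+1 ≤ 2*m by omega)]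
    have e3 : 2*m+1-(k+1) = (2*m-1-k)+1 := by omega
    rw [e3]

end KronMain

/-- the images `ρ_SO(x_{e_i−e_j}(t), I)` and `ρ_SO(x_{e_i+e_j}(t), I)` of
the Kronecker tensor product map `SO_{2n} × SO_{2m} → SO_{4nm}` are the stated products
of orthogonal Chevalley generators of `M_{4nm}(F)`, whose factors pairwise commute. -/
theorem kron_so_generator_left (F : Type*) [Field F] (n m : ℕ) (hn : 1 ≤ n) (hm : 1 ≤ m)
    (i j : ℕ) (hi : 1 ≤ i) (hij : i < j) (hj : j ≤ n) (t : F) :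
    let D := (2*n)*(2*m)
    let f : ℕ → Matrix (Fin D) (Fin D) F :=
      fun k => xDsub F D (2*m*(i-1)+k) (2*m*(j-1)+k) t
    let g : ℕ → Matrix (Fin D) (Fin D) F :=
      fun k => xDadd F D (2*m*(i-1)+k) (2*m*(j-1)+(2*m+1-k)) t
    kron (xDsub F (2*n) i j t) (1 : Matrix (Fin (2*m)) (Fin (2*m)) F)
        = ((List.range (2*m)).map (fun k => f (k+1))).prod ∧
    kron (xDadd F (2*n) i j t) (1 : Matrix (Fin (2*m)) (Fin (2*m)) F)
        = ((List.range (2*m)).map (fun k => g (k+1))).prod ∧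
    (∀ k ∈ Finset.Icc 1 (2*m), ∀ k' ∈ Finset.Icc 1 (2*m), Commute (f k) (f k')) ∧
    (∀ k ∈ Finset.Icc 1 (2*m), ∀ k' ∈ Finset.Icc 1 (2*m), Commute (g k) (g k')) := by
  intro D f g
  refine ⟨kron_part1 hi hij hj t, kron_part2 hi hij hj t, ?_, ?_⟩
  · intro k hk k' hk'
    rw [Finset.mem_Icc] at hk hk'
    exact commuteOneAdd (MfD_mul t hi hij hj hk.1 hk.2 hk'.1 hk'.2)
      (MfD_mul t hi hij hj hk'.1 hk'.2 hk.1 hk.2)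
  · intro k hk k' hk'
    rw [Finset.mem_Icc] at hk hk'
    exact commuteOneAdd (MgD_mul t hi hij hj hk.1 hk.2 hk'.1 hk'.2)
      (MgD_mul t hi hij hj hk'.1 hk'.2 hk.1 hk.2)
end

section
/- Let n ≥ 1. In the polynomial ring ℤ[X_1, …, X_n], let S be the additive subgroup generated by all products (v_1X_1 + ⋯ + v_nX_n)·(w_1X_1 + ⋯ + w_nX_n), where v, w ∈ ℤⁿ are integer vectors each having even coordinate sum (v_1 + ⋯ + v_n and w_1 + ⋯ + w_n both even). Let q = X_1² + ⋯ + X_n². Then the set {c ∈ ℤ : c·q ∈ S} equals k·ℤ, where k = 1 if n ≡ 0 (mod 4), k = 2 if n ≡ 2 (mod 4), and k = 4 if n is odd. (This computation identifies the normalized Killing forms q_{PSp_{2n}} = q_{PSO_{2n}} = k·(X_1² + ⋯ + X_n²): the character lattice of a maximal torus of PSp_{2n} and PSO_{2n} is the sublattice of ℤⁿ of vectors with even coordinate sum, and S is the image of the symmetric square of this lattice inside the integral quadratic forms.) -/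
open MvPolynomial
open Finset

noncomputable def sgen (n : ℕ) : AddSubgroup (MvPolynomial (Fin n) ℤ) := AddSubgroup.closure
  {p | ∃ v w : Fin n → ℤ, Even (∑ i, v i) ∧ Even (∑ i, w i) ∧
    p = (∑ i, C (v i) * X i) * (∑ i, C (w i) * X i)}

lemma pair_mem (n : ℕ) (a b c d : Fin n)
    (c1 c2 c3 c4 : ℤ) (h1 : Even (c1 + c2)) (h2 : Even (c3 + c4)) :
    (C c1 * X a + C c2 * X b) * (C c3 * X c + C c4 * X d) ∈ sgen n := by
  apply AddSubgroup.subset_closure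
  refine ⟨fun i => (if i = a then c1 else 0) + (if i = b then c2 else 0),
    fun i => (if i = c then c3 else 0) + (if i = d then c4 else 0), ?_, ?_, ?_⟩
  · simpa [Finset.sum_add_distrib] using h1
  · simpa [Finset.sum_add_distrib] using h2
  · have e1 : (∑ i, C ((if i = a then c1 else 0) + (if i = b then c2 else 0)) * X i
        : MvPolynomial (Fin n) ℤ) = C c1 * X a + C c2 * X b := by
      simp [map_add, add_mul, Finset.sum_add_distrib, apply_ite C, ite_mul]
    have e2 : (∑ i, C ((if i = c then c3 else 0) + (if i = d then c4 else 0)) * X i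
        : MvPolynomial (Fin n) ℤ) = C c3 * X c + C c4 * X d := by
      simp [map_add, add_mul, Finset.sum_add_distrib, apply_ite C, ite_mul]
    rw [e1, e2]

lemma single_mem (n : ℕ) (a : Fin n) (c1 c2 : ℤ) (h1 : Even c1) (h2 : Even c2) :
    (C c1 * X a) * (C c2 * X a) ∈ sgen n := by
  apply AddSubgroup.subset_closure
  refine ⟨fun i => if i = a then c1 else 0, fun i => if i = a then c2 else 0, ?_, ?_, ?_⟩
  · simpa using h1
  · simpa using h2
  · simp [apply_ite C, ite_mul]

lemma four_mem (n : ℕ) : (4:ℤ) • (∑ i, (X i)^2 : MvPolynomial (Fin n) ℤ) ∈ sgen n := by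
  rw [Finset.smul_sum]
  apply AddSubgroup.sum_mem
  intro i _
  have := single_mem n i 2 2 (by decide) (by decide)
  have e : (C (2:ℤ) * X i) * (C 2 * X i) = (4:ℤ) • (X i)^2 := by
    rw [smul_eq_C_mul, show ((4:ℤ) : ℤ) = 2*2 from rfl, map_mul]; ring
  rwa [e] at this

section reindex
variable {M : Type*} [AddCommMonoid M]

lemma sum_range_two (m : ℕ) (f : ℕ → M) :
    ∑ i ∈ range (2*m), f i = ∑ j ∈ range m, (f (2*j) + f (2*j+1)) := by
  induction m with
  | zero => simp
  | succ m ih =>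
    rw [show 2*(m+1) = (2*m+1)+1 by ring, Finset.sum_range_succ, Finset.sum_range_succ,
      Finset.sum_range_succ, ih, add_assoc]

lemma sum_range_four (m : ℕ) (f : ℕ → M) :
    ∑ i ∈ range (4*m), f i = ∑ j ∈ range m, (f (4*j) + f (4*j+1) + f (4*j+2) + f (4*j+3)) := by
  induction m with
  | zero => simp
  | succ m ih =>
    rw [show 4*(m+1) = (((4*m+1)+1)+1)+1 by ring, Finset.sum_range_succ, Finset.sum_range_succ,
      Finset.sum_range_succ, Finset.sum_range_succ, Finset.sum_range_succ, ih]
    abel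
end reindex

/-- rewrite the `Fin` sum of squares as a `range` sum. -/
lemma q_eq (n : ℕ) : (∑ i, (X i)^2 : MvPolynomial (Fin n) ℤ)
    = ∑ j ∈ range n, (if h : j < n then (X (⟨j, h⟩ : Fin n))^2 else 0) := by
  rw [← Fin.sum_univ_eq_sum_range]
  exact Finset.sum_congr rfl fun i _ => by simp

lemma two_mem (n m : ℕ) (hm : n = 2*m) :
    (2:ℤ) • (∑ i, (X i)^2 : MvPolynomial (Fin n) ℤ) ∈ sgen n := by
  set f : ℕ → MvPolynomial (Fin n) ℤ := fun j => if h : j < n then (X (⟨j, h⟩ : Fin n))^2 else 0 with hf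
  rw [q_eq, ← hf, show range n = range (2*m) by rw [hm], sum_range_two, Finset.smul_sum]
  apply AddSubgroup.sum_mem
  intro j hj
  have hj' : j < m := Finset.mem_range.mp hj
  have h1 : 2*j < n := by omega
  have h2 : 2*j+1 < n := by omega
  set a : Fin n := ⟨2*j, h1⟩
  set b : Fin n := ⟨2*j+1, h2⟩
  have e : (2:ℤ) • (f (2*j) + f (2*j+1))
      = (C 1 * X a + C 1 * X b) * (C 1 * X a + C 1 * X b)
        + (C 1 * X a + C (-1) * X b) * (C 1 * X a + C (-1) * X b) := by
    rw [hf]; simp only [dif_pos h1, dif_pos h2, map_one, map_neg, smul_eq_C_mul]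
    rw [show ((2:ℤ):ℤ) = 2 from rfl, show (C (2:ℤ) : MvPolynomial (Fin n) ℤ) = 2 by simp]
    ring
  rw [e]
  exact AddSubgroup.add_mem _
    (pair_mem n a b a b 1 1 1 1 (by decide) (by decide))
    (pair_mem n a b a b 1 (-1) 1 (-1) (by decide) (by decide))

lemma one_mem (n m : ℕ) (hm : n = 4*m) :
    (∑ i, (X i)^2 : MvPolynomial (Fin n) ℤ) ∈ sgen n := by
  set f : ℕ → MvPolynomial (Fin n) ℤ := fun j => if h : j < n then (X (⟨j, h⟩ : Fin n))^2 else 0 with hf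
  rw [q_eq, ← hf, show range n = range (4*m) by rw [hm], sum_range_four]
  apply AddSubgroup.sum_mem
  intro j hj
  have hj' : j < m := Finset.mem_range.mp hj
  have h1 : 4*j < n := by omega
  have h2 : 4*j+1 < n := by omega
  have h3 : 4*j+2 < n := by omega
  have h4 : 4*j+3 < n := by omega
  set a : Fin n := ⟨4*j, h1⟩
  set b : Fin n := ⟨4*j+1, h2⟩
  set c : Fin n := ⟨4*j+2, h3⟩
  set d : Fin n := ⟨4*j+3, h4⟩
  have e : f (4*j) + f (4*j+1) + f (4*j+2) + f (4*j+3)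
      = (C 1 * X a + C 1 * X b) * (C 1 * X a + C 1 * X b)
        + (C 1 * X c + C 1 * X d) * (C 1 * X c + C 1 * X d)
        + (C 1 * X a + C 1 * X b) * (C 1 * X c + C 1 * X d)
        - (C 1 * X a + C 1 * X c) * (C 1 * X b + C 1 * X d)
        - (C 1 * X a + C 1 * X d) * (C 1 * X b + C 1 * X c) := by
    rw [hf]; simp only [dif_pos h1, dif_pos h2, dif_pos h3, dif_pos h4, map_one]
    ring
  rw [e]
  refine AddSubgroup.sub_mem _ (AddSubgroup.sub_mem _ (AddSubgroup.add_mem _ (AddSubgroup.add_mem _ ?_ ?_) ?_) ?_) ?_ <;>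
    exact pair_mem n _ _ _ _ 1 1 1 1 (by decide) (by decide)

lemma eval_dvd (n : ℕ) {p : MvPolynomial (Fin n) ℤ} (hp : p ∈ sgen n) :
    (4:ℤ) ∣ eval (fun _ => (1:ℤ)) p := by
  refine AddSubgroup.closure_induction ?_ ?_ ?_ ?_ hp
  · rintro x ⟨v, w, ⟨s, hs⟩, ⟨t, ht⟩, rfl⟩
    have ev : ∀ u : Fin n → ℤ, eval (fun _ => (1:ℤ)) (∑ i, C (u i) * X i) = ∑ i, u i := by
      intro u; simp
    rw [map_mul, ev, ev, hs, ht]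
    exact ⟨s*t, by ring⟩
  · simp
  · intro x y _ _ hx hy; rw [map_add]; exact dvd_add hx hy
  · intro x _ hx; rw [map_neg]; exact dvd_neg.mpr hx


/-- in `ℤ[X_1, …, X_n]`, let `S` be the additive subgroup generated by
products of two linear forms whose integer coefficient vectors each have even
coordinate sum, and let `q = X_1² + ⋯ + X_n²`. Then `{c : ℤ | c·q ∈ S} = kℤ`, where
`k = 1` if `n ≡ 0 (mod 4)`, `k = 2` if `n ≡ 2 (mod 4)`, and `k = 4` if `n` is odd. -/
theorem killing_form_multiple (n : ℕ) (hn : 1 ≤ n) :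
    let q : MvPolynomial (Fin n) ℤ := ∑ i, (X i) ^ 2
    let S : AddSubgroup (MvPolynomial (Fin n) ℤ) := AddSubgroup.closure
      {p | ∃ v w : Fin n → ℤ, Even (∑ i, v i) ∧ Even (∑ i, w i) ∧
        p = (∑ i, C (v i) * X i) * (∑ i, C (w i) * X i)}
    let k : ℤ := if n % 4 = 0 then 1 else if n % 4 = 2 then 2 else 4
    ∀ c : ℤ, c • q ∈ S ↔ k ∣ c := by
  intro q S k c
  have hq : q = ∑ i, (X i) ^ 2 := rfl
  have hS : S = sgen n := rfl
  have hk : k = if n % 4 = 0 then 1 else if n % 4 = 2 then 2 else 4 := rfl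
  constructor
  · intro hc
    have h4 : (4:ℤ) ∣ c * n := by
      have := eval_dvd n (hS ▸ hc)
      rw [hq] at this
      simpa [smul_eq_C_mul, mul_comm] using this
    rw [hk]
    by_cases h0 : n % 4 = 0
    · simp [h0]
    by_cases h2 : n % 4 = 2
    · rw [if_neg h0, if_pos h2]
      obtain ⟨t, ht⟩ : ∃ t, n = 4*t+2 := ⟨n/4, by omega⟩
      have key : (2:ℤ) ∣ c * (2*t+1) := by
        obtain ⟨s, hs⟩ := h4
        refine ⟨s, ?_⟩
        have : c * ((4*t+2 : ℕ) : ℤ) = 4 * s := by rw [← ht]; exact hs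
        push_cast at this; linarith
      rcases Int.prime_two.dvd_mul.mp key with h | h
      · exact h
      · exfalso; obtain ⟨u, hu⟩ := h; omega
    · rw [if_neg h0, if_neg h2]
      have hodd : n % 2 = 1 := by omega
      have hnodd : ¬ (2:ℤ) ∣ (n:ℤ) := by
        rintro ⟨u, hu⟩; omega
      have h2c : (2:ℤ) ∣ c := by
        have : (2:ℤ) ∣ c * n := dvd_trans ⟨2, by norm_num⟩ h4
        rcases Int.prime_two.dvd_mul.mp this with h | h
        · exact h
        · exact absurd h hnodd
      obtain ⟨c', rfl⟩ := h2c
      have : (2:ℤ) ∣ c' * n := by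
        obtain ⟨s, hs⟩ := h4
        refine ⟨s, ?_⟩; linarith
      rcases Int.prime_two.dvd_mul.mp this with h | h
      · exact mul_dvd_mul_left 2 h
      · exact absurd h hnodd
  · intro hkc
    obtain ⟨d, rfl⟩ := hkc
    rw [show (k * d) • q = d • (k • q) by rw [mul_comm, mul_smul]]
    refine AddSubgroup.zsmul_mem _ ?_ d
    rw [hS, hq, hk]
    by_cases h0 : n % 4 = 0
    · rw [if_pos h0, one_smul]
      exact one_mem n (n/4) (by omega)
    by_cases h2 : n % 4 = 2
    · rw [if_neg h0, if_pos h2]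
      exact two_mem n (n/2) (by omega)
    · rw [if_neg h0, if_neg h2]
      exact four_mem n
end
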